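/- (The Golden order is a ring) Let θ = (1+√5)/2 and θ̄ = (1−√5)/2 be real numbers viewed in ℂ. Let Λ be the set of 2×2 complex matrices of the form [[p+qθ, i·(r+sθ̄)], [r+sθ, p+qθ̄]] with p, q, r, s Gaussian integers (elements of ℤ[i] viewed as complex numbers). Then there is a subring of the ring of 2×2 complex matrices whose carrier set is exactly Λ; i.e., Λ contains 0 and the identity matrix and is closed under addition, negation, and matrix multiplication. -/

import Mathlib

open Matrix

/-- `θ = (1+√5)/2` viewed in `ℂ`. -/
noncomputable def goldenTheta : ℂ := (((1 + Real.sqrt 5) / 2 : ℝ) : ℂ)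

/-- `θ̄ = (1-√5)/2` viewed in `ℂ`. -/
noncomputable def goldenThetaBar : ℂ := (((1 - Real.sqrt 5) / 2 : ℝ) : ℂ)

/-- The set `Λ` of matrices `[[p+qθ, i(r+sθ̄)],[r+sθ, p+qθ̄]]` with `p,q,r,s ∈ ℤ[i]`. -/
def goldenOrder : Set (Matrix (Fin 2) (Fin 2) ℂ) :=
  {M | ∃ p q r s : GaussianInt,
    M = !![GaussianInt.toComplex p + GaussianInt.toComplex q * goldenTheta,
           Complex.I * (GaussianInt.toComplex r + GaussianInt.toComplex s * goldenThetaBar);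
           GaussianInt.toComplex r + GaussianInt.toComplex s * goldenTheta,
           GaussianInt.toComplex p + GaussianInt.toComplex q * goldenThetaBar]}

/-!
Write `x₀ + e x₁ ↦ [[x₀, γ σ(x₁)], [x₁, σ(x₀)]]` with `x₀ = p + qθ`, `x₁ = r + sθ` and
`σ θ = θ'`. Multiplying two such matrices and reducing with `θ + θ' = 1`, `θ θ' = -1` (the
relations of the two roots of `X² - X - 1`) gives again a matrix of this shape, whose new
coordinates are polynomials in the old ones and `γ`. Hence for any subring `A` containing `γ` the
matrices with coordinates in `A` form a subring; `Λ` is the case `A = ℤ[i]`, `γ = i`.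
-/

variable {R : Type*} [CommRing R]

def cyclicMatrix (γ θ θ' p q r s : R) : Matrix (Fin 2) (Fin 2) R :=
  !![p + q * θ, γ * (r + s * θ'); r + s * θ, p + q * θ']

section

variable (γ θ θ' : R)

theorem cyclicMatrix_zero : cyclicMatrix γ θ θ' 0 0 0 0 = 0 := by
  ext i j
  fin_cases i <;> fin_cases j <;> simp [cyclicMatrix]

theorem cyclicMatrix_one : cyclicMatrix γ θ θ' 1 0 0 0 = 1 := by
  simp [cyclicMatrix, one_fin_two]

theorem cyclicMatrix_add (p q r s p' q' r' s' : R) :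
    cyclicMatrix γ θ θ' p q r s + cyclicMatrix γ θ θ' p' q' r' s' =
      cyclicMatrix γ θ θ' (p + p') (q + q') (r + r') (s + s') := by
  ext i j
  fin_cases i <;> fin_cases j <;> simp [cyclicMatrix] <;> ring

theorem cyclicMatrix_neg (p q r s : R) :
    -cyclicMatrix γ θ θ' p q r s = cyclicMatrix γ θ θ' (-p) (-q) (-r) (-s) := by
  ext i j
  fin_cases i <;> fin_cases j <;> simp [cyclicMatrix] <;> ring

end

theorem cyclicMatrix_mul {γ θ θ' : R} (hsum : θ + θ' = 1) (hprod : θ * θ' = -1)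
    (p q r s p' q' r' s' : R) :
    cyclicMatrix γ θ θ' p q r s * cyclicMatrix γ θ θ' p' q' r' s' =
      cyclicMatrix γ θ θ' (p * p' + q * q' + γ * (r * r' - s * s' + s * r'))
        (p * q' + q * p' + q * q' + γ * (r * s' - s * r'))
        (r * p' + s * q' + p * r' + q * r' - q * s')
        (r * q' + s * p' + s * q' + p * s' - q * r') := by
  simp only [cyclicMatrix, mul_fin_two]
  congr 1
  simp only [vecCons_inj, and_true]
  refine ⟨⟨?_, ?_⟩, ?_, ?_⟩
  · linear_combination (q * q' * θ + γ * s * r') * hsum + (γ * s * s' - q * q') * hprod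
  · linear_combination γ * ((q * r' + s * q' * θ') * hsum + (q * s' - s * q') * hprod)
  · linear_combination (s * q' * θ + q * r') * hsum + (q * s' - s * q') * hprod
  · linear_combination (q * q' * θ' + γ * s * r') * hsum + (γ * s * s' - q * q') * hprod

def cyclicMatrixSubring (A : Subring R) {γ θ θ' : R} (hγ : γ ∈ A) (hsum : θ + θ' = 1)
    (hprod : θ * θ' = -1) : Subring (Matrix (Fin 2) (Fin 2) R) where
  carrier := {M | ∃ p ∈ A, ∃ q ∈ A, ∃ r ∈ A, ∃ s ∈ A, M = cyclicMatrix γ θ θ' p q r s}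
  zero_mem' := ⟨0, A.zero_mem, 0, A.zero_mem, 0, A.zero_mem, 0, A.zero_mem,
    (cyclicMatrix_zero γ θ θ').symm⟩
  one_mem' := ⟨1, A.one_mem, 0, A.zero_mem, 0, A.zero_mem, 0, A.zero_mem,
    (cyclicMatrix_one γ θ θ').symm⟩
  add_mem' := by
    rintro _ _ ⟨p, hp, q, hq, r, hr, s, hs, rfl⟩ ⟨p', hp', q', hq', r', hr', s', hs', rfl⟩
    exact ⟨_, add_mem hp hp', _, add_mem hq hq', _, add_mem hr hr', _, add_mem hs hs',
      cyclicMatrix_add ..⟩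
  neg_mem' := by
    rintro _ ⟨p, hp, q, hq, r, hr, s, hs, rfl⟩
    exact ⟨_, neg_mem hp, _, neg_mem hq, _, neg_mem hr, _, neg_mem hs, cyclicMatrix_neg ..⟩
  mul_mem' := by
    rintro _ _ ⟨p, hp, q, hq, r, hr, s, hs, rfl⟩ ⟨p', hp', q', hq', r', hr', s', hs', rfl⟩
    refine ⟨_, ?_, _, ?_, _, ?_, _, ?_, cyclicMatrix_mul hsum hprod ..⟩
    all_goals aesop (add safe apply [add_mem, sub_mem, mul_mem])

theorem goldenTheta_add_goldenThetaBar : goldenTheta + goldenThetaBar = 1 := by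
  simp only [goldenTheta, goldenThetaBar]
  push_cast
  ring

theorem goldenTheta_mul_goldenThetaBar : goldenTheta * goldenThetaBar = -1 := by
  have h5 : (Real.sqrt 5 : ℂ) ^ 2 = 5 := by
    exact_mod_cast Real.sq_sqrt (by norm_num : (0 : ℝ) ≤ 5)
  simp only [goldenTheta, goldenThetaBar]
  push_cast
  linear_combination -h5 / 4

theorem GaussianInt.I_mem_range_toComplex : Complex.I ∈ GaussianInt.toComplex.range :=
  ⟨⟨0, 1⟩, by simp [GaussianInt.toComplex_def']⟩

theorem stmt_4 :
    ∃ S : Subring (Matrix (Fin 2) (Fin 2) ℂ),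
      (S : Set (Matrix (Fin 2) (Fin 2) ℂ)) = goldenOrder := by
  refine ⟨cyclicMatrixSubring GaussianInt.toComplex.range GaussianInt.I_mem_range_toComplex
    goldenTheta_add_goldenThetaBar goldenTheta_mul_goldenThetaBar, ?_⟩
  ext M
  simp [cyclicMatrixSubring, goldenOrder, cyclicMatrix]
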